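/- Let (a,s) be a regular node primitives pair and ξ > 0 a real number. Then (ξa, ξs) is a regular node primitives pair and W^{𝓗,𝓛}(ξa, ξs) = W^{𝓗,𝓛}(a,s), while D^{𝓗,𝓛}(ξa, ξs) = ξ·D^{𝓗,𝓛}(a,s). -/

import Mathlib

open Filter MeasureTheory Topology ENNReal ProbabilityTheory

noncomputable section

/-- The ambient path space: functions `ℝ → ℝ`, endowed with the topology of the
norm `‖d‖ = sup_t |d(t)|/(1+|t|)` and the σ-algebra generated by the
one-dimensional projections. -/
def FPath : Type := ℝ → ℝ

namespace FPath

/-- The extended distance induced by the norm `‖d‖ = sup_t |d(t)|/(1+|t|)`. -/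
protected def edist (f g : FPath) : ℝ≥0∞ :=
  ⨆ t : ℝ, ENNReal.ofReal (|f t - g t| / (1 + |t|))

instance : EMetricSpace FPath where
  edist := FPath.edist
  edist_self f := by simp [FPath.edist]
  edist_comm f g := by simp [FPath.edist, abs_sub_comm]
  edist_triangle f g h := by
    refine iSup_le fun t => ?_
    have ht : (0:ℝ) < 1 + |t| := by positivity
    calc ENNReal.ofReal (|f t - h t| / (1 + |t|))
        ≤ ENNReal.ofReal (|f t - g t| / (1 + |t|) + |g t - h t| / (1 + |t|)) := by
          refine ENNReal.ofReal_le_ofReal ?_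
          rw [← add_div]
          gcongr
          exact abs_sub_le _ _ _
      _ ≤ ENNReal.ofReal (|f t - g t| / (1 + |t|)) + ENNReal.ofReal (|g t - h t| / (1 + |t|)) :=
          ENNReal.ofReal_add_le
      _ ≤ FPath.edist f g + FPath.edist g h :=
          add_le_add (le_iSup (fun t => ENNReal.ofReal (|f t - g t| / (1 + |t|))) t)
            (le_iSup (fun t => ENNReal.ofReal (|g t - h t| / (1 + |t|))) t)
  eq_of_edist_eq_zero := by
    intro f g hfg
    have hfg' : FPath.edist f g = 0 := hfg
    funext t
    have h0 : ENNReal.ofReal (|f t - g t| / (1 + |t|)) = 0 := by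
      refine le_antisymm ?_ zero_le
      rw [← hfg']
      exact le_iSup (fun t => ENNReal.ofReal (|f t - g t| / (1 + |t|))) t
    have ht : (0:ℝ) < 1 + |t| := by positivity
    rw [ENNReal.ofReal_eq_zero] at h0
    have hnn : 0 ≤ |f t - g t| / (1 + |t|) := div_nonneg (abs_nonneg _) ht.le
    have hz : |f t - g t| / (1 + |t|) = 0 := le_antisymm h0 hnn
    have : |f t - g t| = 0 := by
      rcases div_eq_zero_iff.mp hz with h | h
      · exact h
      · exact absurd h ht.ne'
    exact sub_eq_zero.mp (abs_eq_zero.mp this)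

/-- The σ-algebra generated by the one-dimensional projections. -/
instance : MeasurableSpace FPath :=
  ⨆ t : ℝ, MeasurableSpace.comap (fun f : FPath => f t) inferInstance

/-- `d` has asymptotic rate `l` at `-∞` and `u` at `+∞`. -/
def HasRates (d : FPath) (l u : ℝ) : Prop :=
  Tendsto (fun t => d t / t) atBot (nhds l) ∧ Tendsto (fun t => d t / t) atTop (nhds u)

/-- Membership in `𝒟`: right-continuous with left limits and with asymptotic
rates at `±∞`. -/
def MemD (d : FPath) : Prop :=
  (∀ t : ℝ, ContinuousWithinAt d (Set.Ici t) t) ∧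
  (∀ t : ℝ, ∃ L : ℝ, Tendsto d (nhdsWithin t (Set.Iio t)) (nhds L)) ∧
  ∃ l u : ℝ, d.HasRates l u

/-- Membership in `𝓘`: the nondecreasing elements of `𝒟`. -/
def MemI (d : FPath) : Prop := MemD d ∧ Monotone d

/-- Membership in `𝒟₀`: elements of `𝒟` with zero asymptotic rates. -/
def MemD0 (d : FPath) : Prop := MemD d ∧ d.HasRates 0 0

/-- Membership in `𝓘_inv`: continuous nondecreasing elements of `𝒟` with
strictly positive asymptotic rates. -/
def MemIinv (d : FPath) : Prop :=
  MemI d ∧ Continuous d ∧ ∃ l u : ℝ, d.HasRates l u ∧ 0 < l ∧ 0 < u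

/-- The running supremum `(sup d)(t) = sup_{τ ≤ t} d(τ)`. -/
def runSup (d : FPath) : FPath := fun t => sSup {x : ℝ | ∃ τ ≤ t, x = d τ}

/-- The right-continuous inverse `c⁻¹(t) = sup {τ : c(τ) ≤ t}`. -/
protected def inv (c : FPath) : FPath := fun t => sSup {τ : ℝ | c τ ≤ t}

/-- The identity path. -/
protected def id : FPath := fun t => t

end FPath

/-- A rate function is good if it is lower semicontinuous with compact level
sets. -/
def GoodRate {E : Type*} [TopologicalSpace E] (I : E → ℝ≥0∞) : Prop :=
  LowerSemicontinuous I ∧ ∀ c : ℝ≥0∞, c ≠ ⊤ → IsCompact {x : E | I x ≤ c}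

/-- The sequence of random elements `X k` satisfies a large deviation principle
with normalizing sequence `b` and rate function `I`. -/
def SatisfiesLDP {E : Type*} [TopologicalSpace E] [MeasurableSpace E]
    {Ω : Type*} [MeasurableSpace Ω] (P : Measure Ω)
    (X : ℕ → Ω → E) (b : ℕ → ℝ) (I : E → ℝ≥0∞) : Prop :=
  Tendsto b atTop atTop ∧
  ∀ A : Set E, MeasurableSet A →
    (limsup (fun k => (((b k)⁻¹ : ℝ) : EReal) * ENNReal.log (P (X k ⁻¹' A))) atTop
       ≤ -((⨅ x ∈ closure A, I x : ℝ≥0∞) : EReal)) ∧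
    (-((⨅ x ∈ interior A, I x : ℝ≥0∞) : EReal)
       ≤ liminf (fun k => (((b k)⁻¹ : ℝ) : EReal) * ENNReal.log (P (X k ⁻¹' A))) atTop)

section Node

variable {𝓜 : Type*} [Fintype 𝓜] [DecidableEq 𝓜]

/-- The idle time after service of high-priority customers:
`U^𝓗(a,s) = sup(id − Σ_{j∈𝓗} s_j⁻¹∘a_j)`. -/
def Unode (H : Finset 𝓜) (a s : 𝓜 → FPath) : FPath :=
  FPath.runSup (fun t => t - ∑ j ∈ H, (s j).inv (a j t))

/-- The high-priority workload `V^𝓗(a,s)`. -/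
def Vnode (H : Finset 𝓜) (a s : 𝓜 → FPath) : FPath :=
  fun t => (∑ j ∈ H, (s j).inv (a j t)) - t + Unode H a s t

/-- The cumulative idle time `Y^{𝓗,𝓛}(a,s)`. -/
def Ynode (H L : Finset 𝓜) (a s : 𝓜 → FPath) : FPath :=
  FPath.runSup (fun t => Unode H a s t - ∑ j ∈ L, (s j).inv (a j t))

/-- The low-priority workload `W^{𝓗,𝓛}(a,s)`. -/
def Wnode (H L : Finset 𝓜) (a s : 𝓜 → FPath) : FPath :=
  fun t => (∑ j ∈ L, (s j).inv (a j t)) - Unode H a s t + Ynode H L a s t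

/-- The cumulative departures `D^{𝓗,𝓛}(a,s)`. -/
def Dnode (H L : Finset 𝓜) (a s : 𝓜 → FPath) : 𝓜 → FPath := fun j t =>
  if j ∈ H then
    sSup {x : ℝ | ∃ τ ≤ t,
      (∑ l ∈ H, (s l).inv (a l τ)) ≤ (∑ l ∈ H, (s l).inv (a l t)) - Vnode H a s t ∧ x = a j τ}
  else if j ∈ L then
    sSup {x : ℝ | ∃ τ ≤ t,
      (∑ l ∈ L, (s l).inv (a l τ)) ≤ (∑ l ∈ L, (s l).inv (a l t)) - Wnode H L a s t ∧ x = a j τ}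
  else a j t

/-- The queue lengths `Q^{𝓗,𝓛}(a,s) = a − D^{𝓗,𝓛}(a,s)`. -/
def Qnode (H L : Finset 𝓜) (a s : 𝓜 → FPath) : 𝓜 → FPath :=
  fun j t => a j t - Dnode H L a s j t

/-- The observer departure times `Z^{𝓗,𝓛}(a,s)`. -/
def Znode (H L : Finset 𝓜) (a s : 𝓜 → FPath) : 𝓜 → FPath := fun j t =>
  if j ∈ H then sInf {τ : ℝ | t ≤ τ ∧ ∀ l ∈ H, a l t ≤ Dnode H L a s l τ}
  else if j ∈ L then sInf {τ : ℝ | t ≤ τ ∧ ∀ l ∈ L, a l t ≤ Dnode H L a s l τ}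
  else t

/-- The simplified heavy-traffic map `Ũ^𝓗(a,s)`. -/
def Utilde (H : Finset 𝓜) (α σ : 𝓜 → ℝ) (a s : 𝓜 → FPath) : FPath :=
  fun t => ∑ j ∈ H, (s j (α j / σ j * t) / σ j - a j t / σ j)

/-- The simplified heavy-traffic map `Ỹ^{𝓗,𝓛}(a,s)`. -/
def Ytilde (H L : Finset 𝓜) (α σ : 𝓜 → ℝ) (a s : 𝓜 → FPath) : FPath :=
  FPath.runSup (fun t => ∑ j ∈ H ∪ L, (s j (α j / σ j * t) / σ j - a j t / σ j))

/-- The simplified heavy-traffic map `W̃^{𝓗,𝓛}(a,s)`. -/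
def Wtilde (H L : Finset 𝓜) (α σ : 𝓜 → ℝ) (a s : 𝓜 → FPath) : FPath :=
  fun t => (∑ j ∈ H ∪ L, (a j t / σ j - s j (α j / σ j * t) / σ j)) + Ytilde H L α σ a s t

/-- `(a,s)` is a regular node primitives pair. -/
def IsRegularPair (H L : Finset 𝓜) (a s : 𝓜 → FPath) : Prop :=
  (∀ j, FPath.MemI (a j)) ∧ (∀ j ∈ H ∪ L, FPath.MemIinv (s j)) ∧
  ∃ la ls : 𝓜 → ℝ,
    (∀ j, Tendsto (fun t => a j t / t) atBot (nhds (la j))) ∧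
    (∀ j ∈ H ∪ L, Tendsto (fun t => s j t / t) atBot (nhds (ls j))) ∧
    ∑ j ∈ H ∪ L, la j / ls j < 1


section Helpers

variable {𝓜 : Type*} [Fintype 𝓜] [DecidableEq 𝓜]

lemma FPath.inv_scale {ξ : ℝ} (hξ : 0 < ξ) (s : FPath) (x : ℝ) :
    FPath.inv (fun t => ξ * s t : FPath) (ξ * x) = FPath.inv s x := by
  unfold FPath.inv
  congr 1
  ext τ
  exact mul_le_mul_iff_right₀ hξ

lemma sum_inv_scale {ξ : ℝ} (hξ : 0 < ξ) (a s : 𝓜 → FPath) (F : Finset 𝓜) (τ : ℝ) :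
    ∑ j ∈ F, FPath.inv (fun t => ξ * s j t : FPath) (ξ * a j τ)
      = ∑ j ∈ F, FPath.inv (s j) (a j τ) :=
  Finset.sum_congr rfl fun j _ => FPath.inv_scale hξ (s j) (a j τ)

lemma Unode_scale {ξ : ℝ} (hξ : 0 < ξ) (H : Finset 𝓜) (a s : 𝓜 → FPath) :
    Unode H (fun j => (fun t => ξ * a j t : FPath)) (fun j => (fun t => ξ * s j t : FPath))
      = Unode H a s := by
  unfold Unode
  simp only [FPath.inv_scale hξ]

lemma Vnode_scale {ξ : ℝ} (hξ : 0 < ξ) (H : Finset 𝓜) (a s : 𝓜 → FPath) :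
    Vnode H (fun j => (fun t => ξ * a j t : FPath)) (fun j => (fun t => ξ * s j t : FPath))
      = Vnode H a s := by
  unfold Vnode
  funext t
  simp only [FPath.inv_scale hξ, Unode_scale hξ]

lemma Ynode_scale {ξ : ℝ} (hξ : 0 < ξ) (H L : Finset 𝓜) (a s : 𝓜 → FPath) :
    Ynode H L (fun j => (fun t => ξ * a j t : FPath)) (fun j => (fun t => ξ * s j t : FPath))
      = Ynode H L a s := by
  unfold Ynode
  simp only [FPath.inv_scale hξ, Unode_scale hξ]

lemma Wnode_scale {ξ : ℝ} (hξ : 0 < ξ) (H L : Finset 𝓜) (a s : 𝓜 → FPath) :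
    Wnode H L (fun j => (fun t => ξ * a j t : FPath)) (fun j => (fun t => ξ * s j t : FPath))
      = Wnode H L a s := by
  unfold Wnode
  funext t
  simp only [FPath.inv_scale hξ, Unode_scale hξ, Ynode_scale hξ]

lemma memD_scale {d : FPath} (hd : d.MemD) (ξ : ℝ) :
    FPath.MemD (fun t => ξ * d t : FPath) := by
  obtain ⟨hrc, hll, l, u, hl, hu⟩ := hd
  refine ⟨fun t => (hrc t).const_mul ξ, fun t => ?_, ξ * l, ξ * u, ?_, ?_⟩
  · obtain ⟨Lt, hLt⟩ := hll t
    exact ⟨ξ * Lt, (hLt.const_mul ξ : _)⟩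
  · simpa only [mul_div_assoc] using hl.const_mul ξ
  · simpa only [mul_div_assoc] using hu.const_mul ξ

end Helpers

lemma sSup_scale_set {ξ : ℝ} (hξ : 0 < ξ) (t : ℝ) (p : ℝ → Prop) (f : ℝ → ℝ) :
    sSup {x : ℝ | ∃ τ ≤ t, p τ ∧ x = ξ * f τ}
      = ξ * sSup {x : ℝ | ∃ τ ≤ t, p τ ∧ x = f τ} := by
  have h := Real.sSup_smul_of_nonneg hξ.le {x : ℝ | ∃ τ ≤ t, p τ ∧ x = f τ}
  rw [smul_eq_mul] at h
  rw [← h]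
  congr 1
  ext x
  simp only [Set.mem_smul_set, Set.mem_setOf_eq, smul_eq_mul]
  constructor
  · rintro ⟨τ, hτ, hp, rfl⟩
    exact ⟨f τ, ⟨τ, hτ, hp, rfl⟩, rfl⟩
  · rintro ⟨y, ⟨τ, hτ, hp, rfl⟩, rfl⟩
    exact ⟨τ, hτ, hp, rfl⟩

theorem scaling_invariance
    (H L : Finset 𝓜) (hHL : Disjoint H L) (hLne : L.Nonempty)
    (a s : 𝓜 → FPath) (hreg : IsRegularPair H L a s) (ξ : ℝ) (hξ : 0 < ξ) :
    IsRegularPair H L (fun j => (fun t => ξ * a j t : FPath))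
      (fun j => (fun t => ξ * s j t : FPath)) ∧
    Wnode H L (fun j => (fun t => ξ * a j t : FPath)) (fun j => (fun t => ξ * s j t : FPath))
      = Wnode H L a s ∧
    Dnode H L (fun j => (fun t => ξ * a j t : FPath)) (fun j => (fun t => ξ * s j t : FPath))
      = fun j => (fun t => ξ * Dnode H L a s j t : FPath) := by
  obtain ⟨ha, hs, la, ls, hla, hls, hsum⟩ := hreg
  refine ⟨⟨fun j => ⟨memD_scale (ha j).1 ξ,
      fun x y hxy => mul_le_mul_of_nonneg_left ((ha j).2 hxy) hξ.le⟩,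
      fun j hj => ?_,
      fun j => ξ * la j, fun j => ξ * ls j, fun j => ?_, fun j hj => ?_, ?_⟩, ?_, ?_⟩
  · obtain ⟨⟨hd, hmono⟩, hcont, l, u, ⟨hl, hu⟩, hl0, hu0⟩ := hs j hj
    exact ⟨⟨memD_scale hd ξ, fun x y hxy => mul_le_mul_of_nonneg_left (hmono hxy) hξ.le⟩,
      continuous_const.mul hcont, ξ * l, ξ * u,
      ⟨by simpa only [mul_div_assoc] using hl.const_mul ξ,
       by simpa only [mul_div_assoc] using hu.const_mul ξ⟩,
      mul_pos hξ hl0, mul_pos hξ hu0⟩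
  · simpa only [mul_div_assoc] using (hla j).const_mul ξ
  · simpa only [mul_div_assoc] using (hls j hj).const_mul ξ
  · calc ∑ j ∈ H ∪ L, ξ * la j / (ξ * ls j) = ∑ j ∈ H ∪ L, la j / ls j :=
          Finset.sum_congr rfl fun j _ => mul_div_mul_left _ _ hξ.ne'
      _ < 1 := hsum
  · exact Wnode_scale hξ H L a s
  · funext j
    funext t
    unfold Dnode
    by_cases hjH : j ∈ H
    · simp only [if_pos hjH, FPath.inv_scale hξ, Vnode_scale hξ]
      exact sSup_scale_set hξ t _ _
    · by_cases hjL : j ∈ L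
      · simp only [if_neg hjH, if_pos hjL, FPath.inv_scale hξ, Wnode_scale hξ]
        exact sSup_scale_set hξ t _ _
      · simp only [if_neg hjH, if_neg hjL]


end Node

end
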